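/- arXiv:0906.3804 — 5 statements merged into one kernel-verified Lean document; each statement's English description precedes it below -/
import Mathlib

section
/- For every t ∈ [0,T], the function Υ_s := Im g(s) / ‖w(s)‖ is differentiable at t with derivative ∂_t Υ_t = −Υ_t · 2a·Y_t² / ‖Z_t‖⁴, where Z_t = g(t) − V(t) and Y_t = Im Z_t. In particular, t ↦ Υ_t is nonincreasing on [0,T]. -/
/-!
Write `Z = g - V = X + iY`, so that `Y = Im g` as `V` is real. Then `(Im g)' = Im (a / Z) = -a Y / |Z|²`,
and since `w' / w = -a / Z²`, `(log |w|)' = Re (-a / Z²) = -a (X² - Y²) / |Z|⁴`. Hence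
`(log Υ)' = (-a Y (X² + Y²) + a Y (X² - Y²)) / (Y |Z|⁴) = -2 a Y² / |Z|⁴ ≤ 0`.
-/

open Complex Set
open scoped RealInnerProductSpace

theorem HasDerivWithinAt.complex_im {f : ℝ → ℂ} {f' : ℂ} {s : Set ℝ} {t : ℝ}
    (hf : HasDerivWithinAt f f' s t) : HasDerivWithinAt (fun x => (f x).im) f'.im s t :=
  imCLM.hasFDerivAt.comp_hasDerivWithinAt t hf

theorem HasDerivWithinAt.norm {F : Type*} [NormedAddCommGroup F] [InnerProductSpace ℝ F]
    {f : ℝ → F} {f' : F} {s : Set ℝ} {t : ℝ} (hf : HasDerivWithinAt f f' s t) (h0 : f t ≠ 0) :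
    HasDerivWithinAt (fun x => ‖f x‖) (⟪f t, f'⟫ / ‖f t‖) s t := by
  have h := hf.norm_sq.sqrt (by positivity)
  simp only [Real.sqrt_sq (norm_nonneg _)] at h
  convert h using 1
  ring

theorem HasDerivWithinAt.norm_of_deriv_eq_mul {w : ℝ → ℂ} {k : ℂ} {s : Set ℝ} {t : ℝ}
    (hw : HasDerivWithinAt w (w t * k) s t) (h0 : w t ≠ 0) :
    HasDerivWithinAt (fun x => ‖w x‖) (‖w t‖ * k.re) s t := by
  convert hw.norm h0 using 1
  have hn : ‖w t‖ ≠ 0 := norm_ne_zero_iff.mpr h0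
  rw [Complex.inner, mul_comm (w t) k, mul_assoc, mul_conj, re_mul_ofReal, normSq_eq_norm_sq]
  field_simp

theorem im_ofReal_div_add_im_mul_re_ofReal_div_sq (a : ℝ) (Z : ℂ) :
    ((a : ℂ) / Z).im + Z.im * ((a : ℂ) / Z ^ 2).re = -(Z.im * (2 * a * Z.im ^ 2 / ‖Z‖ ^ 4)) := by
  rcases eq_or_ne Z 0 with rfl | hZ0
  · simp
  have hZ : normSq Z ≠ 0 := normSq_eq_zero.not.mpr hZ0
  rw [show ‖Z‖ ^ 4 = normSq Z ^ 2 by rw [← Complex.sq_norm]; ring, div_im, div_re, map_pow]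
  simp only [ofReal_re, ofReal_im, sq, mul_re, mul_im, normSq_apply] at hZ ⊢
  field_simp
  ring

theorem hasDerivWithinAt_im_div_norm_of_loewner (a v : ℝ) {g w : ℝ → ℂ} {s : Set ℝ} {t : ℝ}
    (hw0 : w t ≠ 0) (hg : HasDerivWithinAt g ((a : ℂ) / (g t - v)) s t)
    (hw : HasDerivWithinAt w (-(a : ℂ) * w t / (g t - v) ^ 2) s t) :
    HasDerivWithinAt (fun x => (g x).im / ‖w x‖)
      (-((g t).im / ‖w t‖) * (2 * a * (g t - v).im ^ 2 / ‖g t - v‖ ^ 4)) s t := by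
  set Z := g t - v
  have hnorm : HasDerivWithinAt (fun x => ‖w x‖) (‖w t‖ * (-(a : ℂ) / Z ^ 2).re) s t :=
    (hw.congr_deriv (by ring)).norm_of_deriv_eq_mul hw0
  have hn : ‖w t‖ ≠ 0 := norm_ne_zero_iff.mpr hw0
  refine (hg.complex_im.div hnorm hn).congr_deriv ?_
  have hY : (g t).im = Z.im := by simp [Z]
  have := im_ofReal_div_add_im_mul_re_ofReal_div_sq a Z
  rw [hY, neg_div, neg_re]
  field_simp
  linear_combination this

theorem loewner_conformal_radius_deriv_general
    (a : ℝ) (ha : 0 < a) (V : ℝ → ℝ)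
    (T : ℝ)
    (g w : ℝ → ℂ)
    (hg : ∀ t ∈ Set.Icc 0 T, g t ≠ (V t : ℂ) ∧ 0 < (g t).im ∧
      HasDerivWithinAt g ((a : ℂ) / (g t - (V t : ℂ))) (Set.Icc 0 T) t)
    (hw : ∀ t ∈ Set.Icc 0 T, w t ≠ 0 ∧
      HasDerivWithinAt w (-(a : ℂ) * w t / (g t - (V t : ℂ)) ^ 2) (Set.Icc 0 T) t) :
    (∀ t ∈ Set.Icc 0 T,
      HasDerivWithinAt (fun s => (g s).im / ‖w s‖)
        (-((g t).im / ‖w t‖) *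
          (2 * a * ((g t - (V t : ℂ)).im) ^ 2 / ‖g t - (V t : ℂ)‖ ^ 4))
        (Set.Icc 0 T) t) ∧
    AntitoneOn (fun t => (g t).im / ‖w t‖) (Set.Icc 0 T) := by
  have hderiv : ∀ t ∈ Icc 0 T, HasDerivWithinAt (fun s => (g s).im / ‖w s‖)
      (-((g t).im / ‖w t‖) * (2 * a * ((g t - (V t : ℂ)).im) ^ 2 / ‖g t - (V t : ℂ)‖ ^ 4))
      (Icc 0 T) t := fun t ht =>
    hasDerivWithinAt_im_div_norm_of_loewner a (V t) (hw t ht).1 (hg t ht).2.2 (hw t ht).2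
  refine ⟨hderiv, antitoneOn_of_hasDerivWithinAt_nonpos (convex_Icc 0 T)
    (fun t ht => (hderiv t ht).continuousWithinAt)
    (fun t ht => (hderiv t (interior_subset ht)).mono interior_subset) fun t ht => ?_⟩
  have him := (hg t (interior_subset ht)).2.1
  rw [neg_mul, neg_nonpos]
  positivity

/-- For the forward chordal Loewner flow `g` (with derivative `a/(g(t) - V(t))`) and the
spatial derivative process `w` (with `w(0) = 1` and derivative `-a·w(t)/(g(t) - V(t))²`),
the conformal radius process `Υ_t = Im g(t) / ‖w(t)‖` is differentiable with
`∂_t Υ_t = -Υ_t · 2a Y_t² / ‖Z_t‖⁴`, where `Z_t = g(t) - V(t)` and `Y_t = Im Z_t`;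
in particular `t ↦ Υ_t` is nonincreasing on `[0,T]`. -/
theorem loewner_conformal_radius_deriv
    (a : ℝ) (ha : 0 < a) (V : ℝ → ℝ) (hV : Continuous V)
    (z : ℂ) (hz : 0 < z.im) (T : ℝ) (hT : 0 < T)
    (g w : ℝ → ℂ)
    (hg0 : g 0 = z)
    (hg : ∀ t ∈ Set.Icc 0 T, g t ≠ (V t : ℂ) ∧ 0 < (g t).im ∧
      HasDerivWithinAt g ((a : ℂ) / (g t - (V t : ℂ))) (Set.Icc 0 T) t)
    (hw0 : w 0 = 1)
    (hw : ∀ t ∈ Set.Icc 0 T, w t ≠ 0 ∧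
      HasDerivWithinAt w (-(a : ℂ) * w t / (g t - (V t : ℂ)) ^ 2) (Set.Icc 0 T) t) :
    (∀ t ∈ Set.Icc 0 T,
      HasDerivWithinAt (fun s => (g s).im / ‖w s‖)
        (-((g t).im / ‖w t‖) *
          (2 * a * ((g t - (V t : ℂ)).im) ^ 2 / ‖g t - (V t : ℂ)‖ ^ 4))
        (Set.Icc 0 T) t) ∧
    AntitoneOn (fun t => (g t).im / ‖w t‖) (Set.Icc 0 T) :=
  loewner_conformal_radius_deriv_general a ha V T g w hg hw
end

section
/- For every t ∈ [0,T], the function Y_s = Im h(s) is differentiable at t with derivative ∂_t Y_t = a·Y_t / ‖Z_t‖². In particular t ↦ Y_t is nondecreasing on [0,T], Y_t > 0 for all t, and Y_t² ≤ (Im z)² + 2at for all t ∈ [0,T]. -/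
/-!
Differentiating `Im` along `h' = a / (U - h)` gives `Y' = (a / ‖Z‖²) Y`, a linear equation with a
positive coefficient, so `Y` cannot reach `0` and is nondecreasing. Since `|Y| ≤ ‖Z‖`, moreover
`(Y²)' = 2a Y² / ‖Z‖² ≤ 2a`, and integrating gives the bound on `Y²`.
-/

open Set

theorem Complex.im_ofReal_div_neg (a : ℝ) (w : ℂ) : ((a : ℂ) / -w).im = a * w.im / ‖w‖ ^ 2 := by
  rw [Complex.div_im, Complex.sq_norm]
  simp only [Complex.ofReal_im, Complex.ofReal_re, Complex.neg_im, Complex.normSq_neg, zero_mul,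
    zero_div, zero_sub, mul_neg, neg_div, neg_neg]

theorem Complex.mul_im_sq_div_norm_sq_le {a : ℝ} (ha : 0 ≤ a) (w : ℂ) :
    a * w.im ^ 2 / ‖w‖ ^ 2 ≤ a := by
  rcases eq_or_ne w 0 with rfl | hw
  · simpa using ha
  rw [div_le_iff₀ (by positivity)]
  have : w.im ^ 2 ≤ ‖w‖ ^ 2 := sq_le_sq.2 (by simpa using Complex.abs_im_le_norm w)
  exact mul_le_mul_of_nonneg_left this ha

section RealODE

variable {f f' : ℝ → ℝ} {a b : ℝ}

theorem monotoneOn_Icc_of_hasDerivAt_nonneg (hf : ContinuousOn f (Icc a b))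
    (hf' : ∀ t ∈ Ioo a b, HasDerivAt f (f' t) t) (hf'_nonneg : ∀ t ∈ Ioo a b, 0 ≤ f' t) :
    MonotoneOn f (Icc a b) :=
  monotoneOn_of_hasDerivWithinAt_nonneg (convex_Icc a b) hf
    (by simpa only [interior_Icc] using fun t ht => (hf' t ht).hasDerivWithinAt)
    (by simpa only [interior_Icc] using hf'_nonneg)

theorem pos_of_deriv_nonneg_of_pos (hf : ContinuousOn f (Icc a b))
    (hf' : ∀ t ∈ Ioo a b, HasDerivAt f (f' t) t) (hfa : 0 < f a)
    (hf'_nonneg : ∀ t ∈ Ioo a b, 0 < f t → 0 ≤ f' t) : ∀ t ∈ Icc a b, 0 < f t := by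
  by_contra! ⟨t₁, ht₁, hft₁⟩
  set A := Icc a b ∩ f ⁻¹' Iic 0
  have hA : IsClosed A := hf.preimage_isClosed_of_isClosed isClosed_Icc isClosed_Iic
  have hA_bdd : BddBelow A := ⟨a, fun _ hx => hx.1.1⟩
  obtain ⟨⟨hat₀, ht₀b⟩, hft₀⟩ : sInf A ∈ A := hA.csInf_mem ⟨t₁, ht₁, hft₁⟩ hA_bdd
  set t₀ := sInf A
  have hpos_before : ∀ s ∈ Ico a t₀, 0 < f s := fun s hs => not_le.1 fun hfs =>
    hs.2.not_ge (csInf_le hA_bdd ⟨⟨hs.1, hs.2.le.trans ht₀b⟩, hfs⟩)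
  have hsub : Ioo a t₀ ⊆ Ioo a b := Ioo_subset_Ioo_right ht₀b
  have hmono : MonotoneOn f (Icc a t₀) :=
    monotoneOn_Icc_of_hasDerivAt_nonneg (hf.mono (Icc_subset_Icc_right ht₀b))
      (fun t ht => hf' t (hsub ht))
      (fun t ht => hf'_nonneg t (hsub ht) (hpos_before t (Ioo_subset_Ico_self ht)))
  exact ((hmono (left_mem_Icc.2 hat₀) (right_mem_Icc.2 hat₀) hat₀).trans hft₀).not_gt hfa

theorem sq_le_sq_add_of_mul_deriv_le {c : ℝ} (hf : ContinuousOn f (Icc a b))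
    (hf' : ∀ t ∈ Ioo a b, HasDerivAt f (f' t) t) (hc : ∀ t ∈ Ioo a b, f t * f' t ≤ c) :
    ∀ t ∈ Icc a b, f t ^ 2 ≤ f a ^ 2 + 2 * c * (t - a) := by
  intro t ht
  have hf_sq : ∀ x ∈ Ioo a b, HasDerivAt (f ^ 2) (2 * (f x * f' x)) x := fun x hx => by
    simpa [mul_assoc] using (hf' x hx).pow 2
  have := (convex_Icc a b).image_sub_le_mul_sub_of_deriv_le (hf.pow 2)
    (fun x hx => (hf_sq x (by rwa [interior_Icc] at hx)).differentiableAt.differentiableWithinAt)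
    (C := 2 * c) (fun x hx => by
      rw [interior_Icc] at hx
      rw [(hf_sq x hx).deriv]
      linarith [hc x hx])
    a (left_mem_Icc.2 (ht.1.trans ht.2)) t ht ht.1
  simp only [Pi.pow_apply] at this
  linarith

end RealODE

theorem reverse_loewner_im_deriv_general
    (a : ℝ) (ha : 0 < a) (U : ℝ → ℝ)
    (z : ℂ) (hz : 0 < z.im) (T : ℝ)
    (h : ℝ → ℂ) (hh0 : h 0 = z)
    (hh : ∀ t ∈ Set.Icc 0 T, h t ≠ (U t : ℂ) ∧
      HasDerivWithinAt h ((a : ℂ) / ((U t : ℂ) - h t)) (Set.Icc 0 T) t) :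
    (∀ t ∈ Set.Icc 0 T,
      HasDerivWithinAt (fun s => (h s).im)
        (a * (h t - (U t : ℂ)).im / ‖h t - (U t : ℂ)‖ ^ 2) (Set.Icc 0 T) t) ∧
    MonotoneOn (fun s => (h s).im) (Set.Icc 0 T) ∧
    (∀ t ∈ Set.Icc 0 T, 0 < (h t).im) ∧
    (∀ t ∈ Set.Icc 0 T, (h t).im ^ 2 ≤ z.im ^ 2 + 2 * a * t) := by
  set Z := fun t => h t - (U t : ℂ)
  have hZ_im (t : ℝ) : (Z t).im = (h t).im := by simp [Z]
  have hY' : ∀ t ∈ Icc 0 T, HasDerivWithinAt (fun s => (h s).im)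
      (a * (Z t).im / ‖Z t‖ ^ 2) (Icc 0 T) t := fun t ht => by
    have := Complex.imCLM.hasFDerivAt.comp_hasDerivWithinAt t (hh t ht).2
    rw [← neg_sub] at this
    simpa only [Function.comp_def, Complex.imCLM_apply, Complex.im_ofReal_div_neg] using this
  have hY_cont : ContinuousOn (fun s => (h s).im) (Icc 0 T) := fun t ht =>
    (hY' t ht).continuousWithinAt
  have hY'_Ioo : ∀ t ∈ Ioo 0 T, HasDerivAt (fun s => (h s).im) (a * (Z t).im / ‖Z t‖ ^ 2) t :=
    fun t ht => (hY' t (Ioo_subset_Icc_self ht)).hasDerivAt (Icc_mem_nhds ht.1 ht.2)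
  have hY_pos : ∀ t ∈ Icc 0 T, 0 < (h t).im :=
    pos_of_deriv_nonneg_of_pos hY_cont hY'_Ioo (by rwa [hh0]) fun t _ hYt => by
      rw [hZ_im]; positivity
  refine ⟨hY', ?_, hY_pos, fun t ht => ?_⟩
  · refine monotoneOn_Icc_of_hasDerivAt_nonneg hY_cont hY'_Ioo fun t ht => ?_
    have hYt := hY_pos t (Ioo_subset_Icc_self ht)
    rw [hZ_im]; positivity
  · have := sq_le_sq_add_of_mul_deriv_le hY_cont hY'_Ioo (fun t _ => by
      rw [← hZ_im, ← mul_div_assoc, mul_left_comm, ← sq]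
      exact Complex.mul_im_sq_div_norm_sq_le ha.le (Z t)) t ht
    simpa [hh0] using this

/-- For the reverse Loewner flow `h` (with `h(0) = z ∈ ℍ` and derivative `a/(U(t) - h(t))`),
the imaginary part `Y_t = Im h(t)` is differentiable with `∂_t Y_t = a·Y_t/‖Z_t‖²` where
`Z_t = h(t) - U(t)`; in particular `Y` is nondecreasing, positive, and
`Y_t² ≤ (Im z)² + 2at` on `[0,T]`. -/
theorem reverse_loewner_im_deriv
    (a : ℝ) (ha : 0 < a) (U : ℝ → ℝ) (hU : Continuous U)
    (z : ℂ) (hz : 0 < z.im) (T : ℝ) (hT : 0 < T)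
    (h : ℝ → ℂ) (hh0 : h 0 = z)
    (hh : ∀ t ∈ Set.Icc 0 T, h t ≠ (U t : ℂ) ∧
      HasDerivWithinAt h ((a : ℂ) / ((U t : ℂ) - h t)) (Set.Icc 0 T) t) :
    (∀ t ∈ Set.Icc 0 T,
      HasDerivWithinAt (fun s => (h s).im)
        (a * (h t - (U t : ℂ)).im / ‖h t - (U t : ℂ)‖ ^ 2) (Set.Icc 0 T) t) ∧
    MonotoneOn (fun s => (h s).im) (Set.Icc 0 T) ∧
    (∀ t ∈ Set.Icc 0 T, 0 < (h t).im) ∧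
    (∀ t ∈ Set.Icc 0 T, (h t).im ^ 2 ≤ z.im ^ 2 + 2 * a * t) :=
  reverse_loewner_im_deriv_general a ha U z hz T h hh0 hh
end

section
/- Assume the moment condition. Then there exists a constant C < ∞, depending only on c and β, such that for all m ≥ n, 𝔼[(Θ_{1,m} − Θ_{1,n})²] ≤ C · δ_n^{β/2}. -/
/-!
`Θ n` is the predictable part of the Doob decomposition of `L` sampled along `Q n`. As
`Q n ⊆ Q m`, the increment of `Θ m` over an interval `[r, r']` of `Q n` has the increment of
`Θ n` as its conditional expectation given `F r`. The differences of the two increments are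
therefore martingale differences, orthogonal in `L²`, and by Pythagoras each has second moment
at most `𝔼[(Θ_{r',m} - Θ_{r,m})²] ≤ c (r' - r)^(β+1)`. The intervals of `Q n` have lengths
`h ≤ min δ_n 1`, so `∑ h^(β+1) ≤ δ_n^(β/2) ∑ h = δ_n^(β/2)`, and `C = c` works.
-/
open MeasureTheory Filter

/-- Setup for the discrete Doob–Meyer approximation scheme: a submartingale
`(L_t)_{t ∈ [0,1]}` with `L 0 = 0` with respect to a filtration `F`, an increasing
sequence of partitions `Q n = {r n 0 < ⋯ < r n (k n)}` of `[0,1]` with meshes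
`δ n → 0`, and the associated increasing processes `Θ n`, defined on the points of
`Q n` by `Θ n 0 = 0` and
`Θ n (r n (j+1)) = Θ n (r n j) + 𝔼[L (r n (j+1)) - L (r n j) | F (r n j)]`. -/
structure DMSetup (Ω : Type) [m0 : MeasurableSpace Ω] (μ : Measure Ω) where
  F : Filtration ℝ m0
  L : ℝ → Ω → ℝ
  hLadapted : ∀ t ∈ Set.Icc (0 : ℝ) 1, StronglyMeasurable[F t] (L t)
  hLint : ∀ t ∈ Set.Icc (0 : ℝ) 1, Integrable (L t) μ
  hLsub : ∀ s t : ℝ, s ∈ Set.Icc (0 : ℝ) 1 → t ∈ Set.Icc (0 : ℝ) 1 → s ≤ t →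
    L s ≤ᵐ[μ] μ[L t | F s]
  hL0 : L 0 = 0
  k : ℕ → ℕ
  hk : ∀ n, 0 < k n
  r : ℕ → ℕ → ℝ
  hr0 : ∀ n, r n 0 = 0
  hr1 : ∀ n, r n (k n) = 1
  hrmono : ∀ n, StrictMonoOn (r n) (Set.Iic (k n))
  hincr : ∀ n, ∀ j ≤ k n, ∃ i ≤ k (n + 1), r (n + 1) i = r n j
  δ : ℕ → ℝ
  hδ : ∀ n, ∀ j < k n, r n (j + 1) - r n j ≤ δ n
  hδ0 : Tendsto δ atTop (nhds 0)
  Θ : ℕ → ℝ → Ω → ℝ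
  hΘ0 : ∀ n, Θ n 0 = 0
  hΘrec : ∀ n, ∀ j < k n,
    Θ n (r n (j + 1)) = Θ n (r n j) + μ[L (r n (j + 1)) - L (r n j) | F (r n j)]

/-- The moment condition: each `Θ n` is square-integrable at the partition points, and
`𝔼[(Θ_{t,n} - Θ_{s,n})²] ≤ c (t - s)^(β+1)` for all `s < t` in `Q n`. -/
def DMSetup.MomentCond {Ω : Type} [m0 : MeasurableSpace Ω] {μ : Measure Ω}
    (S : DMSetup Ω μ) (c β : ℝ) : Prop :=
  (∀ n, ∀ j ≤ S.k n, MemLp (S.Θ n (S.r n j)) 2 μ) ∧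
  (∀ n, ∀ i j : ℕ, i ≤ j → j ≤ S.k n →
    (∫ ω, (S.Θ n (S.r n j) ω - S.Θ n (S.r n i) ω) ^ 2 ∂μ) ≤
      c * (S.r n j - S.r n i) ^ (β + 1))

open Finset

section Orthogonality

variable {Ω : Type*} {m m0 : MeasurableSpace Ω} {μ : Measure Ω} [IsFiniteMeasure μ]

theorem integral_mul_eq_zero_of_condExp_eq_zero (hm : m ≤ m0) {f g : Ω → ℝ}
    (hf : StronglyMeasurable[m] f) (hfg : Integrable (f * g) μ) (hg : Integrable g μ)
    (hg0 : μ[g | m] =ᵐ[μ] 0) : ∫ ω, f ω * g ω ∂μ = 0 := by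
  calc ∫ ω, f ω * g ω ∂μ = ∫ ω, (μ[f * g | m]) ω ∂μ := (integral_condExp hm).symm
    _ = ∫ ω, f ω * (μ[g | m]) ω ∂μ :=
      integral_congr_ae (condExp_mul_of_stronglyMeasurable_left hf hfg hg)
    _ = 0 := integral_eq_zero_of_ae (by filter_upwards [hg0] with ω hω; simp [hω])

theorem integral_add_sq_of_condExp_eq_zero (hm : m ≤ m0) {u v : Ω → ℝ}
    (hu : MemLp u 2 μ) (hv : MemLp v 2 μ) (hum : StronglyMeasurable[m] u)
    (hv0 : μ[v | m] =ᵐ[μ] 0) :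
    ∫ ω, (u ω + v ω) ^ 2 ∂μ = ∫ ω, u ω ^ 2 ∂μ + ∫ ω, v ω ^ 2 ∂μ := by
  have huv : Integrable (fun ω => 2 * (u ω * v ω)) μ := (hu.integrable_mul hv).const_mul 2
  have hcross := integral_mul_eq_zero_of_condExp_eq_zero hm hum (hu.integrable_mul hv)
    (hv.integrable one_le_two) hv0
  calc ∫ ω, (u ω + v ω) ^ 2 ∂μ = ∫ ω, u ω ^ 2 + 2 * (u ω * v ω) + v ω ^ 2 ∂μ := by
        congr with ω; ring
    _ = ∫ ω, u ω ^ 2 ∂μ + ∫ ω, v ω ^ 2 ∂μ := by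
        rw [integral_add (f := fun ω => u ω ^ 2 + 2 * (u ω * v ω)) (hu.integrable_sq.add huv)
            hv.integrable_sq, integral_add hu.integrable_sq huv, integral_const_mul, hcross]
        ring

theorem condExp_sub_ae_eq_zero (hm : m ≤ m0) {f g : Ω → ℝ} (hf : Integrable f μ)
    (hg : Integrable g μ) (hgm : StronglyMeasurable[m] g) (hfg : μ[f | m] =ᵐ[μ] g) :
    μ[f - g | m] =ᵐ[μ] 0 := by
  filter_upwards [condExp_sub hf hg m, hfg] with ω h h'
  simp [h, h', condExp_of_stronglyMeasurable hm hgm hg]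

theorem integral_sq_sub_le_of_condExp_eq_zero (hm : m ≤ m0) {f g : Ω → ℝ}
    (hf : MemLp f 2 μ) (hg : MemLp g 2 μ) (hgm : StronglyMeasurable[m] g)
    (hfg : μ[f - g | m] =ᵐ[μ] 0) : ∫ ω, (f ω - g ω) ^ 2 ∂μ ≤ ∫ ω, f ω ^ 2 ∂μ := by
  have h := integral_add_sq_of_condExp_eq_zero hm hg (hf.sub hg) hgm hfg
  simp only [Pi.sub_apply, add_sub_cancel] at h
  rw [h]
  have hg2 : 0 ≤ ∫ ω, g ω ^ 2 ∂μ := integral_nonneg fun ω => sq_nonneg (g ω)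
  linarith

theorem integral_sq_sum_of_condExp_eq_zero {G : ℕ → MeasurableSpace Ω} (hG : ∀ i, G i ≤ m0)
    {D : ℕ → Ω → ℝ} {K : ℕ} (hD : ∀ i < K, MemLp (D i) 2 μ)
    (hDm : ∀ i j, i < j → j < K → StronglyMeasurable[G j] (D i))
    (hD0 : ∀ j < K, μ[D j | G j] =ᵐ[μ] 0) :
    ∫ ω, (∑ i ∈ range K, D i ω) ^ 2 ∂μ = ∑ i ∈ range K, ∫ ω, D i ω ^ 2 ∂μ := by
  induction K with
  | zero => simp
  | succ K ih =>
    have hsum : MemLp (fun ω => ∑ i ∈ range K, D i ω) 2 μ :=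
      memLp_finsetSum _ fun i hi => hD i (by rw [mem_range] at hi; omega)
    have hsumm : StronglyMeasurable[G K] (fun ω => ∑ i ∈ range K, D i ω) :=
      Finset.stronglyMeasurable_fun_sum _ fun i hi => hDm i K (mem_range.mp hi) (by omega)
    simp only [sum_range_succ]
    rw [integral_add_sq_of_condExp_eq_zero (hG K) hsum (hD K (by omega)) hsumm (hD0 K (by omega)),
      ih (fun i hi => hD i (by omega)) (fun i j hij hj => hDm i j hij (by omega))
        (fun j hj => hD0 j (by omega))]

end Orthogonality

theorem condExp_predictablePart_sub {Ω E : Type*} {m0 : MeasurableSpace Ω} {μ : Measure Ω}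
    [IsFiniteMeasure μ] [NormedAddCommGroup E] [NormedSpace ℝ E] [CompleteSpace E]
    {f : ℕ → Ω → E} {ℱ : Filtration ℕ m0} (hf : StronglyAdapted ℱ f)
    (hfi : ∀ n, Integrable (f n) μ) {i j : ℕ} (hij : i ≤ j) :
    μ[predictablePart f ℱ μ j - predictablePart f ℱ μ i | ℱ i] =ᵐ[μ] μ[f j - f i | ℱ i] := by
  set M := martingalePart f ℱ μ
  have hM : Martingale M ℱ μ := martingale_martingalePart hf hfi
  have hMi : ∀ n, Integrable (M n) μ := integrable_martingalePart hfi
  have hP : ∀ n, predictablePart f ℱ μ n = f n - M n := fun n => by simp [M, martingalePart]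
  have hMinc : μ[M j - M i | ℱ i] =ᵐ[μ] 0 := by
    filter_upwards [condExp_sub (hMi j) (hMi i) (ℱ i), hM.condExp_ae_eq hij,
      hM.condExp_ae_eq (le_refl i)] with ω h h1 h2
    simp [h, h1, h2]
  rw [hP, hP, sub_sub_sub_comm]
  filter_upwards [condExp_sub ((hfi j).sub (hfi i)) ((hMi j).sub (hMi i)) (ℱ i), hMinc]
    with ω h h0
  simp [h, h0]

theorem Real.rpow_add_one_le_rpow_half_mul {h δ β : ℝ} (hβ : 0 ≤ β) (h0 : 0 ≤ h) (h1 : h ≤ 1)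
    (hδ : h ≤ δ) : h ^ (β + 1) ≤ δ ^ (β / 2) * h := by
  rw [Real.rpow_add_one' h0 (by linarith)]
  have hβ2 : 0 ≤ β / 2 := by positivity
  calc h ^ β * h ≤ h ^ (β / 2) * h :=
        mul_le_mul_of_nonneg_right (Real.rpow_le_rpow_of_exponent_ge' h0 h1 hβ2 (by linarith)) h0
    _ ≤ δ ^ (β / 2) * h := by gcongr

namespace DMSetup

variable {Ω : Type} [m0 : MeasurableSpace Ω] {μ : Measure Ω} (S : DMSetup Ω μ)

lemma r_le_r (n : ℕ) {i j : ℕ} (hij : i ≤ j) (hj : j ≤ S.k n) : S.r n i ≤ S.r n j :=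
  (S.hrmono n).monotoneOn (hij.trans hj) hj hij

lemma r_mem_Icc (n : ℕ) {j : ℕ} (hj : j ≤ S.k n) : S.r n j ∈ Set.Icc (0 : ℝ) 1 := by
  rw [← S.hr0 n, ← S.hr1 n]
  exact ⟨S.r_le_r n (Nat.zero_le j) hj, S.r_le_r n hj le_rfl⟩

lemma exists_index_of_le {n m : ℕ} (hnm : n ≤ m) {j : ℕ} (hj : j ≤ S.k n) :
    ∃ a ≤ S.k m, S.r m a = S.r n j := by
  induction m, hnm using Nat.le_induction with
  | base => exact ⟨j, hj, rfl⟩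
  | succ m _ ih =>
    obtain ⟨a, ha, hra⟩ := ih
    obtain ⟨b, hb, hrb⟩ := S.hincr m a ha
    exact ⟨b, hb, hrb.trans hra⟩

lemma exists_indices_of_le {n m : ℕ} (hnm : n ≤ m) {i j : ℕ} (hij : i ≤ j) (hj : j ≤ S.k n) :
    ∃ a b, a ≤ b ∧ b ≤ S.k m ∧ S.r m a = S.r n i ∧ S.r m b = S.r n j := by
  obtain ⟨a, ha, hra⟩ := S.exists_index_of_le hnm (hij.trans hj)
  obtain ⟨b, hb, hrb⟩ := S.exists_index_of_le hnm hj
  refine ⟨a, b, ?_, hb, hra, hrb⟩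
  rw [← (S.hrmono m).le_iff_le ha hb, hra, hrb]
  exact S.r_le_r n hij hj

-- `F` along the points of `Q n`, frozen after the last one so as to be a filtration on all of `ℕ`.
def gridFiltration (n : ℕ) : Filtration ℕ m0 where
  seq i := S.F (S.r n (min i (S.k n)))
  mono' _ _ hij := S.F.mono (S.r_le_r n (min_le_min_right _ hij) (min_le_right _ _))
  le' _ := S.F.le _

def gridL (n i : ℕ) : Ω → ℝ := S.L (S.r n (min i (S.k n)))

lemma gridFiltration_apply {n j : ℕ} (hj : j ≤ S.k n) : S.gridFiltration n j = S.F (S.r n j) := by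
  change S.F (S.r n (min j (S.k n))) = _
  rw [min_eq_left hj]

lemma gridL_apply {n j : ℕ} (hj : j ≤ S.k n) : S.gridL n j = S.L (S.r n j) := by
  rw [gridL, min_eq_left hj]

lemma Θ_eq_predictablePart (n : ℕ) :
    ∀ j ≤ S.k n, S.Θ n (S.r n j) = predictablePart (S.gridL n) (S.gridFiltration n) μ j := by
  intro j
  induction j with
  | zero => intro _; rw [S.hr0 n, S.hΘ0 n, predictablePart_zero]
  | succ j ih =>
    intro hj
    rw [S.hΘrec n j hj, predictablePart_add_one, ← ih (Nat.le_of_lt hj), S.gridL_apply hj,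
      S.gridL_apply (Nat.le_of_lt hj), S.gridFiltration_apply (Nat.le_of_lt hj)]

lemma stronglyMeasurable_Θ (n : ℕ) {j : ℕ} (hj : j ≤ S.k n) :
    StronglyMeasurable[S.F (S.r n j)] (S.Θ n (S.r n j)) := by
  have h : StronglyMeasurable[S.gridFiltration n j]
      (predictablePart (S.gridL n) (S.gridFiltration n) μ j) :=
    stronglyAdapted_predictablePart' j
  rwa [← S.Θ_eq_predictablePart n j hj, S.gridFiltration_apply hj] at h

lemma condExp_Θ_sub [IsFiniteMeasure μ] (n : ℕ) {i j : ℕ} (hij : i ≤ j) (hj : j ≤ S.k n) :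
    μ[S.Θ n (S.r n j) - S.Θ n (S.r n i) | S.F (S.r n i)]
      =ᵐ[μ] μ[S.L (S.r n j) - S.L (S.r n i) | S.F (S.r n i)] := by
  have hi := hij.trans hj
  have h := condExp_predictablePart_sub (μ := μ) (ℱ := S.gridFiltration n) (f := S.gridL n)
    (fun l => S.hLadapted _ (S.r_mem_Icc n (min_le_right l _)))
    (fun l => S.hLint _ (S.r_mem_Icc n (min_le_right l _))) hij
  rwa [← S.Θ_eq_predictablePart n j hj, ← S.Θ_eq_predictablePart n i hi, S.gridL_apply hj,
    S.gridL_apply hi, S.gridFiltration_apply hi] at h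


def ΘIncr (l n i : ℕ) : Ω → ℝ := S.Θ l (S.r n (i + 1)) - S.Θ l (S.r n i)

lemma sum_ΘIncr (l n : ℕ) : ∑ i ∈ range (S.k n), S.ΘIncr l n i = S.Θ l 1 := by
  simp only [ΘIncr]
  rw [Finset.sum_range_sub (fun i => S.Θ l (S.r n i)), S.hr1, S.hr0, S.hΘ0, sub_zero]

lemma ΘIncr_self {n i : ℕ} (hi : i < S.k n) :
    S.ΘIncr n n i = μ[S.L (S.r n (i + 1)) - S.L (S.r n i) | S.F (S.r n i)] := by
  rw [ΘIncr, S.hΘrec n i hi, add_sub_cancel_left]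

lemma stronglyMeasurable_ΘIncr_self {n i : ℕ} (hi : i < S.k n) :
    StronglyMeasurable[S.F (S.r n i)] (S.ΘIncr n n i) :=
  S.ΘIncr_self hi ▸ stronglyMeasurable_condExp

section

variable {n m : ℕ} (hnm : n ≤ m) {i : ℕ} (hi : i < S.k n)
include hnm hi

lemma memLp_ΘIncr {c β : ℝ} (hmc : S.MomentCond c β) : MemLp (S.ΘIncr m n i) 2 μ := by
  obtain ⟨a, b, hab, hb, hra, hrb⟩ := S.exists_indices_of_le hnm i.le_succ hi
  rw [ΘIncr, ← hra, ← hrb]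
  exact (hmc.1 m b hb).sub (hmc.1 m a (hab.trans hb))

lemma integral_sq_ΘIncr_le {c β : ℝ} (hmc : S.MomentCond c β) :
    ∫ ω, S.ΘIncr m n i ω ^ 2 ∂μ ≤ c * (S.r n (i + 1) - S.r n i) ^ (β + 1) := by
  obtain ⟨a, b, hab, hb, hra, hrb⟩ := S.exists_indices_of_le hnm i.le_succ hi
  rw [ΘIncr, ← hra, ← hrb]
  exact hmc.2 m a b hab hb

lemma stronglyMeasurable_ΘIncr {j : ℕ} (hij : i < j) (hj : j ≤ S.k n) :
    StronglyMeasurable[S.F (S.r n j)] (S.ΘIncr m n i) := by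
  obtain ⟨a, b, hab, hb, hra, hrb⟩ := S.exists_indices_of_le hnm i.le_succ hi
  have hFb : S.F (S.r m b) ≤ S.F (S.r n j) := S.F.mono (hrb ▸ S.r_le_r n hij hj)
  have hFa : S.F (S.r m a) ≤ S.F (S.r n j) := S.F.mono (hra ▸ S.r_le_r n hij.le hj)
  rw [ΘIncr, ← hra, ← hrb]
  exact ((S.stronglyMeasurable_Θ m hb).mono hFb).sub
    ((S.stronglyMeasurable_Θ m (hab.trans hb)).mono hFa)

lemma condExp_ΘIncr [IsFiniteMeasure μ] :
    μ[S.ΘIncr m n i | S.F (S.r n i)] =ᵐ[μ] S.ΘIncr n n i := by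
  obtain ⟨a, b, hab, hb, hra, hrb⟩ := S.exists_indices_of_le hnm i.le_succ hi
  have h := S.condExp_Θ_sub m hab hb
  rw [hra, hrb] at h
  rwa [S.ΘIncr_self hi]

end

lemma MomentCond.nonneg {c β : ℝ} (hmc : S.MomentCond c β) : 0 ≤ c := by
  have h := hmc.2 0 0 (S.k 0) (Nat.zero_le _) le_rfl
  rw [S.hr1, S.hr0, sub_zero, Real.one_rpow, mul_one] at h
  exact (integral_nonneg fun ω => sq_nonneg _).trans h

lemma sum_rpow_mesh_le {β : ℝ} (hβ : 0 ≤ β) (n : ℕ) :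
    ∑ i ∈ range (S.k n), (S.r n (i + 1) - S.r n i) ^ (β + 1) ≤ S.δ n ^ (β / 2) := by
  have hstep : ∀ i ∈ range (S.k n), (S.r n (i + 1) - S.r n i) ^ (β + 1)
      ≤ S.δ n ^ (β / 2) * (S.r n (i + 1) - S.r n i) := by
    intro i hi
    have hi : i < S.k n := mem_range.mp hi
    have h0 := S.r_mem_Icc n hi.le
    have h1 := S.r_mem_Icc n hi
    exact Real.rpow_add_one_le_rpow_half_mul hβ (sub_nonneg.mpr (S.r_le_r n i.le_succ hi))
      (by linarith [h0.1, h1.2]) (S.hδ n i hi)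
  calc _ ≤ ∑ i ∈ range (S.k n), S.δ n ^ (β / 2) * (S.r n (i + 1) - S.r n i) := sum_le_sum hstep
    _ = S.δ n ^ (β / 2) := by rw [← mul_sum, sum_range_sub (S.r n), S.hr1, S.hr0, sub_zero, mul_one]

theorem integral_sq_Θ_sub_le [IsFiniteMeasure μ] {c β : ℝ} (hmc : S.MomentCond c β) {n m : ℕ}
    (hnm : n ≤ m) : ∫ ω, (S.Θ m 1 ω - S.Θ n 1 ω) ^ 2 ∂μ
      ≤ c * ∑ i ∈ range (S.k n), (S.r n (i + 1) - S.r n i) ^ (β + 1) := by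
  set D : ℕ → Ω → ℝ := fun i => S.ΘIncr m n i - S.ΘIncr n n i
  have hsum : ∀ ω, S.Θ m 1 ω - S.Θ n 1 ω = ∑ i ∈ range (S.k n), D i ω := fun ω => by
    simp only [D, ← S.sum_ΘIncr m n, ← S.sum_ΘIncr n n, Finset.sum_apply, Pi.sub_apply,
      Finset.sum_sub_distrib]
  have hmem : ∀ l, n ≤ l → ∀ i < S.k n, MemLp (S.ΘIncr l n i) 2 μ :=
    fun l hl i hi => S.memLp_ΘIncr hl hi hmc
  have hD0 : ∀ i < S.k n, μ[D i | S.F (S.r n i)] =ᵐ[μ] 0 := fun i hi =>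
    condExp_sub_ae_eq_zero (S.F.le _) ((hmem m hnm i hi).integrable one_le_two)
      ((hmem n le_rfl i hi).integrable one_le_two)
      (S.stronglyMeasurable_ΘIncr_self hi) (S.condExp_ΘIncr hnm hi)
  calc ∫ ω, (S.Θ m 1 ω - S.Θ n 1 ω) ^ 2 ∂μ = ∑ i ∈ range (S.k n), ∫ ω, D i ω ^ 2 ∂μ := by
        simp_rw [hsum]
        refine integral_sq_sum_of_condExp_eq_zero (fun i => S.F.le _)
          (fun i hi => (hmem m hnm i hi).sub (hmem n le_rfl i hi)) (fun i j hij hj => ?_) hD0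
        exact (S.stronglyMeasurable_ΘIncr hnm (hij.trans hj) hij hj.le).sub
          (S.stronglyMeasurable_ΘIncr le_rfl (hij.trans hj) hij hj.le)
    _ ≤ ∑ i ∈ range (S.k n), ∫ ω, S.ΘIncr m n i ω ^ 2 ∂μ := by
        refine sum_le_sum fun i hi => ?_
        have hi := mem_range.mp hi
        exact integral_sq_sub_le_of_condExp_eq_zero (S.F.le _) (hmem m hnm i hi)
          (hmem n le_rfl i hi) (S.stronglyMeasurable_ΘIncr_self hi) (hD0 i hi)
    _ ≤ ∑ i ∈ range (S.k n), c * (S.r n (i + 1) - S.r n i) ^ (β + 1) :=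
        sum_le_sum fun i hi => S.integral_sq_ΘIncr_le hnm (mem_range.mp hi) hmc
    _ = c * ∑ i ∈ range (S.k n), (S.r n (i + 1) - S.r n i) ^ (β + 1) := (mul_sum _ _ _).symm

end DMSetup

/-- Under the moment condition with constants `c, β`, there is a constant `C < ∞`,
depending only on `c` and `β`, such that for all `m ≥ n`,
`𝔼[(Θ_{1,m} - Θ_{1,n})²] ≤ C δ_n^(β/2)`. -/
theorem dm_cauchy_bound (c β : ℝ) (hβ : 0 < β) :
    ∃ C : ℝ, ∀ (Ω : Type) (m0 : MeasurableSpace Ω) (μ : Measure Ω),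
      IsProbabilityMeasure μ → ∀ S : DMSetup Ω μ, S.MomentCond c β →
      ∀ n m : ℕ, n ≤ m →
        (∫ ω, (S.Θ m 1 ω - S.Θ n 1 ω) ^ 2 ∂μ) ≤ C * S.δ n ^ (β / 2) := by
  refine ⟨c, fun Ω _ μ _ S hmc n m hnm => ?_⟩
  calc (∫ ω, (S.Θ m 1 ω - S.Θ n 1 ω) ^ 2 ∂μ)
      ≤ c * ∑ i ∈ range (S.k n), (S.r n (i + 1) - S.r n i) ^ (β + 1) :=
        S.integral_sq_Θ_sub_le hmc hnm
    _ ≤ c * S.δ n ^ (β / 2) := mul_le_mul_of_nonneg_left (S.sum_rpow_mesh_le hβ.le n) hmc.nonneg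
end

section
/- Assume the moment condition. Then for every t ∈ Q, the sequence (Θ_{t,n})_{n : t ∈ Q_n} converges in L²(ℙ) to a square-integrable random variable Θ_t, and these limits satisfy 𝔼[(Θ_t − Θ_s)²] ≤ c(t−s)^{β+1} for all s < t in Q. -/
open MeasureTheory Filter

/-!
Fix `n ≤ m` and consecutive points `s < t` of `Q_n`, and let `A = Θ_{t,m} - Θ_{s,m}`. By the tower
property `𝔼[A | 𝓕_s] = 𝔼[L_t - L_s | 𝓕_s] = Θ_{t,n} - Θ_{s,n}`, so from `s` to `t` the
discrepancy `Θ_{·,n} - Θ_{·,m}` changes by `𝔼[A | 𝓕_s] - A`. This residual is orthogonal to the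
`𝓕_s`-measurable discrepancy at `s`, and its second moment is at most
`𝔼[A²] ≤ c (t - s)^(β+1) ≤ c δ_n^β (t - s)`. Summing over `Q_n` gives
`𝔼[(Θ_{t,n} - Θ_{t,m})²] ≤ c δ_n^β t`, so `(Θ_{t,n})_n` is Cauchy in `L²`, and the moment bound
passes to the limit.
-/

open Topology

section SquareIntegrable

variable {Ω : Type*} {m m₀ : MeasurableSpace Ω} {μ : Measure Ω}

lemma integral_sq_sub_eq_dist_sq {f g : Ω → ℝ} (hf : MemLp f 2 μ) (hg : MemLp g 2 μ) :
    ∫ ω, (f ω - g ω) ^ 2 ∂μ = dist (hf.toLp f) (hg.toLp g) ^ 2 := by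
  rw [dist_eq_norm, ← MemLp.toLp_sub, ← real_inner_self_eq_norm_sq, L2.inner_def]
  refine integral_congr_ae ?_
  filter_upwards [(hf.sub hg).coeFn_toLp] with ω hω
  simp [hω, sq]

lemma sqrt_integral_sq_sub_eq_dist {f g : Ω → ℝ} (hf : MemLp f 2 μ) (hg : MemLp g 2 μ) :
    √(∫ ω, (f ω - g ω) ^ 2 ∂μ) = dist (hf.toLp f) (hg.toLp g) := by
  rw [integral_sq_sub_eq_dist_sq hf hg, Real.sqrt_sq dist_nonneg]

lemma exists_memLp_tendsto_integral_sq_sub {f : ℕ → Ω → ℝ} {ε : ℕ → ℝ} (N : ℕ)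
    (hf : ∀ n ≥ N, MemLp (f n) 2 μ)
    (hcauchy : ∀ n ≥ N, ∀ m ≥ n, ∫ ω, (f n ω - f m ω) ^ 2 ∂μ ≤ ε n)
    (hε : Tendsto ε atTop (𝓝 0)) :
    ∃ g : Ω → ℝ, MemLp g 2 μ ∧ Tendsto (fun n => ∫ ω, (f n ω - g ω) ^ 2 ∂μ) atTop (𝓝 0) := by
  let F : ℕ → Lp ℝ 2 μ := fun n => (hf (n + N) le_add_self).toLp (f (n + N))
  have hF : CauchySeq F := by
    refine cauchySeq_of_le_tendsto_0' (fun n => √(ε (n + N))) (fun n m hnm => ?_) ?_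
    · rw [← sqrt_integral_sq_sub_eq_dist]
      exact Real.sqrt_le_sqrt (hcauchy _ le_add_self _ (by omega))
    · simpa using (hε.comp (tendsto_add_atTop_nat N)).sqrt
  obtain ⟨g, hg⟩ := cauchySeq_tendsto_of_complete hF
  refine ⟨g, Lp.memLp g, (tendsto_add_atTop_iff_nat N).1 ?_⟩
  have hdist := (tendsto_iff_dist_tendsto_zero.1 hg).pow 2
  rw [zero_pow two_ne_zero] at hdist
  refine hdist.congr fun n => ?_
  rw [integral_sq_sub_eq_dist_sq (hf (n + N) le_add_self) (Lp.memLp g), Lp.toLp_coeFn]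

lemma integral_sq_sub_le_of_tendsto {f h : ℕ → Ω → ℝ} {g k : Ω → ℝ} {C : ℝ}
    (hf : ∀ᶠ n in atTop, MemLp (f n) 2 μ) (hh : ∀ᶠ n in atTop, MemLp (h n) 2 μ)
    (hg : MemLp g 2 μ) (hk : MemLp k 2 μ)
    (hfg : Tendsto (fun n => ∫ ω, (f n ω - g ω) ^ 2 ∂μ) atTop (𝓝 0))
    (hhk : Tendsto (fun n => ∫ ω, (h n ω - k ω) ^ 2 ∂μ) atTop (𝓝 0))
    (hC : ∀ᶠ n in atTop, ∫ ω, (f n ω - h n ω) ^ 2 ∂μ ≤ C) :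
    ∫ ω, (g ω - k ω) ^ 2 ∂μ ≤ C := by
  have hC₀ : 0 ≤ C := by
    obtain ⟨n, hn⟩ := hC.exists
    exact (integral_nonneg fun _ => sq_nonneg _).trans hn
  rw [← Real.sqrt_le_sqrt_iff hC₀]
  have hlim : Tendsto (fun n => √(∫ ω, (f n ω - g ω) ^ 2 ∂μ) + √C
      + √(∫ ω, (h n ω - k ω) ^ 2 ∂μ)) atTop (𝓝 (√C)) := by
    simpa using (hfg.sqrt.add_const √C).add hhk.sqrt
  refine ge_of_tendsto hlim ?_
  filter_upwards [hf, hh, hC] with n hfn hhn hCn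
  calc √(∫ ω, (g ω - k ω) ^ 2 ∂μ)
      = dist (hg.toLp g) (hk.toLp k) := sqrt_integral_sq_sub_eq_dist hg hk
    _ ≤ dist (hfn.toLp _) (hg.toLp g) + dist (hfn.toLp _) (hhn.toLp _)
        + dist (hhn.toLp _) (hk.toLp k) := by
      rw [dist_comm (hfn.toLp _)]
      exact dist_triangle4 _ _ _ _
    _ = √(∫ ω, (f n ω - g ω) ^ 2 ∂μ) + √(∫ ω, (f n ω - h n ω) ^ 2 ∂μ)
        + √(∫ ω, (h n ω - k ω) ^ 2 ∂μ) := by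
      rw [sqrt_integral_sq_sub_eq_dist hfn hg, sqrt_integral_sq_sub_eq_dist hfn hhn,
        sqrt_integral_sq_sub_eq_dist hhn hk]
    _ ≤ _ := by gcongr

lemma integral_mul_eq_zero_of_condExp_ae_eq_zero (hm : m ≤ m₀) [SigmaFinite (μ.trim hm)]
    {X D : Ω → ℝ} (hX : StronglyMeasurable[m] X) (hXD : Integrable (X * D) μ)
    (hD : Integrable D μ) (hD₀ : μ[D|m] =ᵐ[μ] 0) :
    ∫ ω, X ω * D ω ∂μ = 0 := by
  calc ∫ ω, X ω * D ω ∂μ = ∫ ω, μ[X * D|m] ω ∂μ := (integral_condExp hm).symm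
    _ = ∫ ω, (X * μ[D|m]) ω ∂μ :=
      integral_congr_ae (condExp_mul_of_stronglyMeasurable_left hX hXD hD)
    _ = 0 := integral_eq_zero_of_ae (by filter_upwards [hD₀] with ω hω; simp [hω])

lemma condExp_sub_condExp_ae_eq_zero (hm : m ≤ m₀) [SigmaFinite (μ.trim hm)] {A : Ω → ℝ}
    (hA : Integrable A μ) : μ[A - μ[A|m]|m] =ᵐ[μ] 0 := by
  filter_upwards [condExp_sub hA integrable_condExp m] with ω hω
  rw [hω, condExp_of_stronglyMeasurable hm stronglyMeasurable_condExp integrable_condExp]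
  simp

variable [IsFiniteMeasure μ]

lemma integral_add_sq_of_condExp_ae_eq_zero (hm : m ≤ m₀) {X D : Ω → ℝ}
    (hX : MemLp X 2 μ) (hXm : StronglyMeasurable[m] X) (hD : MemLp D 2 μ)
    (hD₀ : μ[D|m] =ᵐ[μ] 0) :
    ∫ ω, (X ω + D ω) ^ 2 ∂μ = ∫ ω, X ω ^ 2 ∂μ + ∫ ω, D ω ^ 2 ∂μ := by
  have hXD : Integrable (X * D) μ := hX.integrable_mul hD
  have hcross := integral_mul_eq_zero_of_condExp_ae_eq_zero hm hXm hXD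
    (hD.integrable one_le_two) hD₀
  have hexpand : ∀ ω, (X ω + D ω) ^ 2 = X ω ^ 2 + 2 * (X ω * D ω) + D ω ^ 2 := fun ω => by ring
  have hXD2 : Integrable (fun ω => 2 * (X ω * D ω)) μ := hXD.const_mul 2
  have hsum : Integrable (fun ω => X ω ^ 2 + 2 * (X ω * D ω)) μ := hX.integrable_sq.add hXD2
  simp_rw [hexpand]
  rw [integral_add hsum hD.integrable_sq, integral_add hX.integrable_sq hXD2,
    integral_const_mul, hcross]
  ring

lemma integral_sq_sub_condExp_le (hm : m ≤ m₀) {A : Ω → ℝ} (hA : MemLp A 2 μ) :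
    ∫ ω, (A ω - μ[A|m] ω) ^ 2 ∂μ ≤ ∫ ω, A ω ^ 2 ∂μ := by
  have hE : MemLp μ[A|m] 2 μ := hA.condExp one_le_two
  have hpythagoras := integral_add_sq_of_condExp_ae_eq_zero hm hE stronglyMeasurable_condExp
    (hA.sub hE) (condExp_sub_condExp_ae_eq_zero hm (hA.integrable one_le_two))
  simp only [Pi.sub_apply, add_sub_cancel] at hpythagoras
  rw [hpythagoras]
  linarith [integral_nonneg (μ := μ) (f := fun ω => μ[A|m] ω ^ 2) fun ω => sq_nonneg _]

lemma integral_sq_add_sub_le (hm : m ≤ m₀) {X A G : Ω → ℝ} (hX : MemLp X 2 μ)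
    (hXm : StronglyMeasurable[m] X) (hA : MemLp A 2 μ) (hG : G =ᵐ[μ] μ[A|m]) :
    ∫ ω, (X ω + (G ω - A ω)) ^ 2 ∂μ ≤ ∫ ω, X ω ^ 2 ∂μ + ∫ ω, A ω ^ 2 ∂μ := by
  calc ∫ ω, (X ω + (G ω - A ω)) ^ 2 ∂μ = ∫ ω, (-X ω + (A ω - μ[A|m] ω)) ^ 2 ∂μ :=
        integral_congr_ae (by filter_upwards [hG] with ω hω; rw [hω]; ring)
    _ = ∫ ω, (-X ω) ^ 2 ∂μ + ∫ ω, (A ω - μ[A|m] ω) ^ 2 ∂μ :=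
        integral_add_sq_of_condExp_ae_eq_zero hm hX.neg hXm.neg (hA.sub (hA.condExp one_le_two))
          (condExp_sub_condExp_ae_eq_zero hm (hA.integrable one_le_two))
    _ ≤ ∫ ω, X ω ^ 2 ∂μ + ∫ ω, A ω ^ 2 ∂μ := by
        simp only [neg_sq]
        exact add_le_add_right (integral_sq_sub_condExp_le hm hA) _

end SquareIntegrable

section Compensator

variable {Ω : Type*} {m₀ : MeasurableSpace Ω} {μ : Measure Ω} {ℱ : ℕ → MeasurableSpace Ω}
  {θ ℓ : ℕ → Ω → ℝ} {k : ℕ}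

lemma integrable_of_compensator_rec (h₀ : Integrable (θ 0) μ)
    (hrec : ∀ j < k, θ (j + 1) = θ j + μ[ℓ (j + 1) - ℓ j|ℱ j]) :
    ∀ j ≤ k, Integrable (θ j) μ := by
  intro j hj
  induction j with
  | zero => exact h₀
  | succ j ih =>
    rw [hrec j hj]
    exact (ih (by omega)).add integrable_condExp

lemma stronglyMeasurable_of_compensator_rec (hℱ : MonotoneOn ℱ (Set.Iic k))
    (h₀ : StronglyMeasurable[ℱ 0] (θ 0))
    (hrec : ∀ j < k, θ (j + 1) = θ j + μ[ℓ (j + 1) - ℓ j|ℱ j]) :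
    ∀ j ≤ k, StronglyMeasurable[ℱ j] (θ j) := by
  intro j hj
  induction j with
  | zero => exact h₀
  | succ j ih =>
    have hle : ℱ j ≤ ℱ (j + 1) := hℱ (by simp; omega) hj (by omega)
    rw [hrec j hj]
    exact ((ih (by omega)).mono hle).add (stronglyMeasurable_condExp.mono hle)

lemma condExp_sub_ae_eq_of_compensator_rec [IsFiniteMeasure μ] (hℱ : MonotoneOn ℱ (Set.Iic k))
    (hℱle : ∀ j, ℱ j ≤ m₀) (hθ : ∀ j ≤ k, Integrable (θ j) μ)
    (hℓ : ∀ j ≤ k, Integrable (ℓ j) μ)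
    (hrec : ∀ j < k, θ (j + 1) = θ j + μ[ℓ (j + 1) - ℓ j|ℱ j]) {p q : ℕ} (hpq : p ≤ q)
    (hq : q ≤ k) :
    μ[θ q - θ p|ℱ p] =ᵐ[μ] μ[ℓ q - ℓ p|ℱ p] := by
  induction q, hpq using Nat.le_induction with
  | base => simp
  | succ q hpq ih =>
    have hle : ℱ p ≤ ℱ q := hℱ (by simp; omega) (by simp; omega) hpq
    have hstep : θ (q + 1) - θ p = (θ q - θ p) + μ[ℓ (q + 1) - ℓ q|ℱ q] := by
      rw [hrec q hq]
      abel
    calc μ[θ (q + 1) - θ p|ℱ p]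
        =ᵐ[μ] μ[θ q - θ p|ℱ p] + μ[μ[ℓ (q + 1) - ℓ q|ℱ q]|ℱ p] := by
          rw [hstep]
          exact condExp_add ((hθ q (by omega)).sub (hθ p (by omega))) integrable_condExp _
      _ =ᵐ[μ] μ[ℓ q - ℓ p|ℱ p] + μ[ℓ (q + 1) - ℓ q|ℱ p] :=
          (ih (by omega)).add (condExp_condExp_of_le hle (hℱle q))
      _ =ᵐ[μ] μ[(ℓ q - ℓ p) + (ℓ (q + 1) - ℓ q)|ℱ p] :=
          (condExp_add ((hℓ q (by omega)).sub (hℓ p (by omega)))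
            ((hℓ (q + 1) hq).sub (hℓ q (by omega))) _).symm
      _ = μ[ℓ (q + 1) - ℓ p|ℱ p] := by rw [sub_add_sub_cancel']

end Compensator

lemma rpow_add_one_le_rpow_mul {x d β : ℝ} (hx : 0 ≤ x) (hxd : x ≤ d) (hβ : 0 ≤ β) :
    x ^ (β + 1) ≤ d ^ β * x := by
  rw [Real.rpow_add_one' hx (by linarith)]
  exact mul_le_mul_of_nonneg_right (Real.rpow_le_rpow hx hxd hβ) hx

namespace DMSetup

variable {Ω : Type} [m0 : MeasurableSpace Ω] {μ : Measure Ω} (S : DMSetup Ω μ)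

/-- The partition `Q_n`. -/
def partition (n : ℕ) : Set ℝ := {t | ∃ j ≤ S.k n, S.r n j = t}

lemma partition_mono : Monotone S.partition :=
  monotone_nat_of_le_succ fun n => by
    rintro _ ⟨j, hj, rfl⟩
    exact S.hincr n j hj

lemma partition_subset_Icc (n : ℕ) : S.partition n ⊆ Set.Icc 0 1 := by
  rintro _ ⟨j, hj, rfl⟩
  have hmono := (S.hrmono n).monotoneOn
  exact ⟨S.hr0 n ▸ hmono (by simp) hj (Nat.zero_le j), S.hr1 n ▸ hmono hj (by simp) hj⟩

lemma delta_nonneg (n : ℕ) : 0 ≤ S.δ n :=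
  (sub_nonneg.2 ((S.hrmono n).monotoneOn (by simp) (S.hk n) zero_le_one)).trans
    (S.hδ n 0 (S.hk n))

lemma monotoneOn_F_r (n : ℕ) : MonotoneOn (fun j => S.F (S.r n j)) (Set.Iic (S.k n)) :=
  fun _ hi _ hj hij => S.F.mono ((S.hrmono n).monotoneOn hi hj hij)

lemma integrable_theta {n : ℕ} {t : ℝ} (ht : t ∈ S.partition n) : Integrable (S.Θ n t) μ := by
  obtain ⟨j, hj, rfl⟩ := ht
  refine integrable_of_compensator_rec (ℱ := fun j => S.F (S.r n j))
    (θ := fun j => S.Θ n (S.r n j)) (ℓ := fun j => S.L (S.r n j)) ?_ (S.hΘrec n) j hj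
  simp [S.hr0, S.hΘ0]

lemma stronglyMeasurable_theta {n : ℕ} {t : ℝ} (ht : t ∈ S.partition n) :
    StronglyMeasurable[S.F t] (S.Θ n t) := by
  obtain ⟨j, hj, rfl⟩ := ht
  refine stronglyMeasurable_of_compensator_rec (ℱ := fun j => S.F (S.r n j))
    (θ := fun j => S.Θ n (S.r n j)) (ℓ := fun j => S.L (S.r n j)) (S.monotoneOn_F_r n) ?_
    (S.hΘrec n) j hj
  simp only [S.hr0, S.hΘ0]
  exact stronglyMeasurable_const

lemma condExp_theta_sub_ae_eq [IsFiniteMeasure μ] {n : ℕ} {s t : ℝ} (hs : s ∈ S.partition n)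
    (ht : t ∈ S.partition n) (hst : s ≤ t) :
    μ[S.Θ n t - S.Θ n s|S.F s] =ᵐ[μ] μ[S.L t - S.L s|S.F s] := by
  obtain ⟨i, hi, rfl⟩ := hs
  obtain ⟨j, hj, rfl⟩ := ht
  exact condExp_sub_ae_eq_of_compensator_rec (ℱ := fun j => S.F (S.r n j))
    (θ := fun j => S.Θ n (S.r n j)) (ℓ := fun j => S.L (S.r n j)) (S.monotoneOn_F_r n)
    (fun _ => S.F.le _) (fun j hj => S.integrable_theta ⟨j, hj, rfl⟩)
    (fun j hj => S.hLint _ (S.partition_subset_Icc n ⟨j, hj, rfl⟩)) (S.hΘrec n)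
    (((S.hrmono n).le_iff_le hi hj).1 hst) hj

variable {S} {c β : ℝ}

lemma MomentCond.memLp (hmom : S.MomentCond c β) {n : ℕ} {t : ℝ} (ht : t ∈ S.partition n) :
    MemLp (S.Θ n t) 2 μ := by
  obtain ⟨j, hj, rfl⟩ := ht
  exact hmom.1 n j hj

lemma MomentCond.integral_sq_sub_le (hmom : S.MomentCond c β) {n : ℕ} {s t : ℝ}
    (hs : s ∈ S.partition n) (ht : t ∈ S.partition n) (hst : s ≤ t) :
    ∫ ω, (S.Θ n t ω - S.Θ n s ω) ^ 2 ∂μ ≤ c * (t - s) ^ (β + 1) := by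
  obtain ⟨i, hi, rfl⟩ := hs
  obtain ⟨j, hj, rfl⟩ := ht
  exact hmom.2 n i j (((S.hrmono n).le_iff_le hi hj).1 hst) hj

lemma MomentCond.const_nonneg (hmom : S.MomentCond c β) : 0 ≤ c := by
  have hpos : 0 < (S.r 0 1 - S.r 0 0) ^ (β + 1) :=
    Real.rpow_pos_of_pos (sub_pos.2 ((S.hrmono 0) (by simp) (S.hk 0) zero_lt_one)) _
  exact nonneg_of_mul_nonneg_left
    ((integral_nonneg fun _ => sq_nonneg _).trans (hmom.2 0 0 1 zero_le_one (S.hk 0))) hpos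

variable [IsFiniteMeasure μ]

lemma MomentCond.integral_sq_sub_theta_succ_le (hmom : S.MomentCond c β) {n m : ℕ}
    (hnm : n ≤ m) {J : ℕ} (hJ : J < S.k n) :
    ∫ ω, (S.Θ n (S.r n (J + 1)) ω - S.Θ m (S.r n (J + 1)) ω) ^ 2 ∂μ
      ≤ ∫ ω, (S.Θ n (S.r n J) ω - S.Θ m (S.r n J) ω) ^ 2 ∂μ
        + c * (S.r n (J + 1) - S.r n J) ^ (β + 1) := by
  have hrec := S.hΘrec n J hJ
  have hst : S.r n J ≤ S.r n (J + 1) := (S.hrmono n).monotoneOn hJ.le hJ (Nat.le_succ J)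
  set s := S.r n J
  set t := S.r n (J + 1)
  have hsn : s ∈ S.partition n := ⟨J, hJ.le, rfl⟩
  have htn : t ∈ S.partition n := ⟨J + 1, hJ, rfl⟩
  have hsm := S.partition_mono hnm hsn
  have htm := S.partition_mono hnm htn
  have hG : S.Θ n t - S.Θ n s =ᵐ[μ] μ[S.Θ m t - S.Θ m s|S.F s] := by
    rw [hrec, add_sub_cancel_left]
    exact (S.condExp_theta_sub_ae_eq hsm htm hst).symm
  calc ∫ ω, (S.Θ n t ω - S.Θ m t ω) ^ 2 ∂μ
      = ∫ ω, ((S.Θ n s ω - S.Θ m s ω)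
          + ((S.Θ n t ω - S.Θ n s ω) - (S.Θ m t ω - S.Θ m s ω))) ^ 2 ∂μ := by
        congr 1 with ω
        ring
    _ ≤ ∫ ω, (S.Θ n s ω - S.Θ m s ω) ^ 2 ∂μ + ∫ ω, (S.Θ m t ω - S.Θ m s ω) ^ 2 ∂μ :=
        integral_sq_add_sub_le (X := S.Θ n s - S.Θ m s) (A := S.Θ m t - S.Θ m s)
          (G := S.Θ n t - S.Θ n s) (S.F.le s) ((hmom.memLp hsn).sub (hmom.memLp hsm))
          ((S.stronglyMeasurable_theta hsn).sub (S.stronglyMeasurable_theta hsm))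
          ((hmom.memLp htm).sub (hmom.memLp hsm)) hG
    _ ≤ _ := add_le_add_right (hmom.integral_sq_sub_le hsm htm hst) _

lemma MomentCond.integral_sq_sub_theta_le_mul (hmom : S.MomentCond c β) (hβ : 0 ≤ β)
    {n m : ℕ} (hnm : n ≤ m) :
    ∀ J ≤ S.k n, ∫ ω, (S.Θ n (S.r n J) ω - S.Θ m (S.r n J) ω) ^ 2 ∂μ
      ≤ c * S.δ n ^ β * S.r n J := by
  intro J hJ
  induction J with
  | zero => simp [S.hr0, S.hΘ0]
  | succ J ih =>
    have hgap : 0 ≤ S.r n (J + 1) - S.r n J :=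
      sub_nonneg.2 ((S.hrmono n).monotoneOn (by simp; omega) hJ (Nat.le_succ J))
    have hmesh := rpow_add_one_le_rpow_mul hgap (S.hδ n J hJ) hβ
    calc _ ≤ c * S.δ n ^ β * S.r n J + c * (S.r n (J + 1) - S.r n J) ^ (β + 1) := by
          linarith [hmom.integral_sq_sub_theta_succ_le (μ := μ) hnm hJ, ih (by omega)]
      _ ≤ c * S.δ n ^ β * S.r n J + c * (S.δ n ^ β * (S.r n (J + 1) - S.r n J)) := by
          gcongr
          exact hmom.const_nonneg
      _ = c * S.δ n ^ β * S.r n (J + 1) := by ring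

lemma MomentCond.integral_sq_sub_theta_le (hmom : S.MomentCond c β) (hβ : 0 ≤ β) {n m : ℕ}
    (hnm : n ≤ m) {t : ℝ} (ht : t ∈ S.partition n) :
    ∫ ω, (S.Θ n t ω - S.Θ m t ω) ^ 2 ∂μ ≤ c * S.δ n ^ β := by
  have ht₁ := (S.partition_subset_Icc n ht).2
  obtain ⟨J, hJ, rfl⟩ := ht
  exact (hmom.integral_sq_sub_theta_le_mul hβ hnm J hJ).trans <| mul_le_of_le_one_right
    (mul_nonneg hmom.const_nonneg (Real.rpow_nonneg (S.delta_nonneg n) β)) ht₁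

end DMSetup

/-- Under the moment condition, for each `t` in `Q = ⋃ n, Q n` the sequence `Θ_{t,n}`
converges in `L²(μ)` to a square-integrable limit `Θ_t`, and these limits satisfy
`𝔼[(Θ_t - Θ_s)²] ≤ c (t - s)^(β+1)` for all `s < t` in `Q`. -/
theorem dm_L2_limit
    {Ω : Type} [m0 : MeasurableSpace Ω] {μ : Measure Ω} [IsProbabilityMeasure μ]
    (S : DMSetup Ω μ) (c β : ℝ) (hβ : 0 < β) (hmom : S.MomentCond c β) :
    ∃ ΘL : ℝ → Ω → ℝ,
      (∀ t : ℝ, (∃ n, ∃ j ≤ S.k n, S.r n j = t) →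
        MemLp (ΘL t) 2 μ ∧
        Tendsto (fun n => ∫ ω, (S.Θ n t ω - ΘL t ω) ^ 2 ∂μ) atTop (nhds 0)) ∧
      (∀ s t : ℝ, (∃ n, ∃ j ≤ S.k n, S.r n j = s) → (∃ n, ∃ j ≤ S.k n, S.r n j = t) →
        s < t → (∫ ω, (ΘL t ω - ΘL s ω) ^ 2 ∂μ) ≤ c * (t - s) ^ (β + 1)) := by
  have hε : Tendsto (fun n => c * S.δ n ^ β) atTop (𝓝 0) := by
    simpa [Real.zero_rpow hβ.ne'] using
      ((Real.continuousAt_rpow_const 0 β (Or.inr hβ.le)).tendsto.comp S.hδ0).const_mul c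
  have hlimit : ∀ t, ∃ g : Ω → ℝ, (∃ n, t ∈ S.partition n) →
      MemLp g 2 μ ∧ Tendsto (fun n => ∫ ω, (S.Θ n t ω - g ω) ^ 2 ∂μ) atTop (𝓝 0) := by
    intro t
    by_cases ht : ∃ n, t ∈ S.partition n
    · obtain ⟨N, hN⟩ := ht
      obtain ⟨g, hg⟩ := exists_memLp_tendsto_integral_sq_sub N
        (fun n hn => hmom.memLp (S.partition_mono hn hN))
        (fun n hn m hm => hmom.integral_sq_sub_theta_le hβ.le hm (S.partition_mono hn hN)) hε
      exact ⟨g, fun _ => hg⟩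
    · exact ⟨0, fun h => absurd h ht⟩
  choose ΘL hΘL using hlimit
  refine ⟨ΘL, hΘL, fun s t hs ht hst => ?_⟩
  obtain ⟨ns, hns⟩ := id hs
  obtain ⟨nt, hnt⟩ := id ht
  have hQ : ∀ᶠ n in atTop, s ∈ S.partition n ∧ t ∈ S.partition n :=
    (eventually_ge_atTop (max ns nt)).mono fun n hn =>
      ⟨S.partition_mono (le_of_max_le_left hn) hns, S.partition_mono (le_of_max_le_right hn) hnt⟩
  exact integral_sq_sub_le_of_tendsto (hQ.mono fun _ h => hmom.memLp h.2)
    (hQ.mono fun _ h => hmom.memLp h.1) (hΘL t ht).1 (hΘL s hs).1 (hΘL t ht).2 (hΘL s hs).2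
    (hQ.mono fun _ h => hmom.integral_sq_sub_le h.1 h.2 hst.le)
end

section
/- Let p, q, β be real numbers with 0 < p < q and β ≥ 0. Then there exists a constant c < ∞ such that for every integer m ≥ 1, Σ_{j=1}^{∞} e^{p j} · min(1, j^β · e^{q(m − j)}) ≤ c · m^β · e^{p m}. -/
/-!
Split the sum at `j = m`. Below it, bounding the minimum by `1` leaves a geometric sum
`∑_{j<m} e^{pj} ≤ e^{pm} / (e^p - 1)`. From `j = m + k` on, bound the minimum by its second
entry: since `m + k ≤ m (k + 1)`, the term is at most `m^β e^{pm} · (k + 1)^β e^{-(q-p)k}`,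
a summable sequence in `k` because `q > p`.
-/

open Real Finset

theorem summable_add_one_rpow_mul_exp_neg_mul (β : ℝ) {r : ℝ} (hr : 0 < r) :
    Summable fun n : ℕ => ((n : ℝ) + 1) ^ β * exp (-r * n) := by
  have h := ((summable_nat_add_iff 1).2 (summable_pow_mul_exp_neg_nat_mul ⌈β⌉₊ hr)).mul_left
    (exp r)
  refine h.of_nonneg_of_le (fun n => by positivity) fun n => ?_
  have hpow : ((n : ℝ) + 1) ^ β ≤ ((n : ℝ) + 1) ^ ⌈β⌉₊ := by
    rw [← rpow_natCast]
    exact rpow_le_rpow_of_exponent_le (by linarith [n.cast_nonneg (α := ℝ)]) (Nat.le_ceil β)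
  have hexp : exp (-r * n) = exp r * exp (-r * ((n + 1 : ℕ) : ℝ)) := by
    rw [← exp_add]; push_cast; ring_nf
  rw [hexp]
  push_cast
  calc ((n : ℝ) + 1) ^ β * (exp r * exp (-r * (n + 1)))
      ≤ ((n : ℝ) + 1) ^ ⌈β⌉₊ * (exp r * exp (-r * (n + 1))) := by gcongr
    _ = _ := by ring

theorem sum_range_pow_succ_le {α : Type*} [Field α] [LinearOrder α] [IsStrictOrderedRing α]
    {x : α} (hx : 1 < x) (m : ℕ) : ∑ j ∈ range m, x ^ (j + 1) ≤ x ^ (m + 1) / (x - 1) := by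
  have hx0 : 0 < x - 1 := sub_pos.2 hx
  simp_rw [pow_succ, ← Finset.sum_mul, geom_sum_eq hx.ne']
  rw [div_mul_eq_mul_div, div_le_div_iff_of_pos_right hx0]
  nlinarith

noncomputable def expMinTerm (p q β x : ℝ) (j : ℕ) : ℝ :=
  exp (p * (j + 1)) * min 1 (((j : ℝ) + 1) ^ β * exp (q * (x - ((j : ℝ) + 1))))

section
variable {p q β : ℝ}

theorem expMinTerm_nonneg (x : ℝ) (j : ℕ) : 0 ≤ expMinTerm p q β x j :=
  mul_nonneg (exp_pos _).le (le_min zero_le_one (by positivity))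

theorem expMinTerm_le_exp_pow (x : ℝ) (j : ℕ) : expMinTerm p q β x j ≤ exp p ^ (j + 1) := by
  rw [← exp_nat_mul, mul_comm, Nat.cast_succ]
  exact mul_le_of_le_one_right (exp_pos _).le (min_le_left _ _)

theorem expMinTerm_add_le (hβ : 0 ≤ β) (m k : ℕ) :
    expMinTerm p q β (m + 1) (k + m) ≤
      ((m : ℝ) + 1) ^ β * exp (p * (m + 1)) * (((k : ℝ) + 1) ^ β * exp (-(q - p) * k)) := by
  have hpow : ((k : ℝ) + m + 1) ^ β ≤ ((m : ℝ) + 1) ^ β * ((k : ℝ) + 1) ^ β := by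
    rw [← mul_rpow (by positivity) (by positivity)]
    exact rpow_le_rpow (by positivity) (by nlinarith [k.cast_nonneg (α := ℝ)]) hβ
  have hexp : exp (p * ((k : ℝ) + m + 1)) * exp (q * ((m : ℝ) + 1 - ((k : ℝ) + m + 1))) =
      exp (p * (m + 1)) * exp (-(q - p) * k) := by
    rw [← exp_add, ← exp_add]; ring_nf
  unfold expMinTerm
  push_cast
  calc exp (p * ((k : ℝ) + m + 1)) *
        min 1 (((k : ℝ) + m + 1) ^ β * exp (q * ((m : ℝ) + 1 - ((k : ℝ) + m + 1))))
      ≤ exp (p * ((k : ℝ) + m + 1)) *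
        (((k : ℝ) + m + 1) ^ β * exp (q * ((m : ℝ) + 1 - ((k : ℝ) + m + 1)))) := by
        gcongr; exact min_le_right _ _
    _ = ((k : ℝ) + m + 1) ^ β * (exp (p * (m + 1)) * exp (-(q - p) * k)) := by
        rw [← hexp]; ring
    _ ≤ ((m : ℝ) + 1) ^ β * ((k : ℝ) + 1) ^ β * (exp (p * (m + 1)) * exp (-(q - p) * k)) := by
        gcongr
    _ = _ := by ring
end

/-- For real `p, q, β` with `0 < p < q` and `β ≥ 0`, there is a constant `c < ∞` such
that for every integer `m ≥ 1`,
`∑_{j=1}^∞ e^(pj) min(1, j^β e^(q(m-j))) ≤ c m^β e^(pm)`. -/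
theorem exp_sum_bound (p q β : ℝ) (hp : 0 < p) (hpq : p < q) (hβ : 0 ≤ β) :
    ∃ c : ℝ, ∀ m : ℕ, 1 ≤ m →
      (∑' j : ℕ, Real.exp (p * (j + 1)) *
          min 1 (((j : ℝ) + 1) ^ β * Real.exp (q * ((m : ℝ) - ((j : ℝ) + 1))))) ≤
        c * (m : ℝ) ^ β * Real.exp (p * m) := by
  set C := ∑' k : ℕ, ((k : ℝ) + 1) ^ β * exp (-(q - p) * k)
  have hC := summable_add_one_rpow_mul_exp_neg_mul β (sub_pos.2 hpq)
  refine ⟨1 / (exp p - 1) + C, fun m hm => ?_⟩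
  obtain ⟨m, rfl⟩ := Nat.exists_eq_add_of_le' hm
  change ∑' j, expMinTerm p q β ((m + 1 : ℕ) : ℝ) j ≤ _
  push_cast
  have htail : Summable fun k => expMinTerm p q β (m + 1) (k + m) :=
    (hC.mul_left _).of_nonneg_of_le (fun _ => expMinTerm_nonneg _ _) (expMinTerm_add_le hβ m)
  have hhead : ∑ j ∈ range m, expMinTerm p q β (m + 1) j ≤ exp (p * (m + 1)) / (exp p - 1) := by
    rw [show p * ((m : ℝ) + 1) = (m + 1 : ℕ) * p by push_cast; ring, exp_nat_mul]
    exact (sum_le_sum fun j _ => expMinTerm_le_exp_pow _ j).trans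
      (sum_range_pow_succ_le (one_lt_exp_iff.2 hp) m)
  have htail_le : ∑' k, expMinTerm p q β (m + 1) (k + m) ≤
      ((m : ℝ) + 1) ^ β * exp (p * (m + 1)) * C :=
    (htail.tsum_le_tsum (expMinTerm_add_le hβ m) (hC.mul_left _)).trans_eq tsum_mul_left
  have hpow : 1 ≤ ((m : ℝ) + 1) ^ β := one_le_rpow (by linarith [m.cast_nonneg (α := ℝ)]) hβ
  have hinv : 0 ≤ 1 / (exp p - 1) := one_div_nonneg.2 (sub_nonneg.2 (one_le_exp hp.le))
  rw [← ((summable_nat_add_iff m).1 htail).sum_add_tsum_nat_add m]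
  calc _ ≤ exp (p * (m + 1)) / (exp p - 1) + ((m : ℝ) + 1) ^ β * exp (p * (m + 1)) * C :=
        add_le_add hhead htail_le
    _ ≤ (1 / (exp p - 1) + C) * ((m : ℝ) + 1) ^ β * exp (p * (m + 1)) := by
        rw [div_eq_mul_one_div, add_mul, add_mul]
        linarith [mul_le_mul_of_nonneg_left hpow (mul_nonneg hinv (exp_pos (p * (m + 1))).le)]
end
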